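/- Let K ≥ 0 be a constant such that for every N and every family u_1, …, u_N : ℝ⁴ → ℝ of continuously differentiable, 2π-periodic functions that are orthonormal in L²([0,2π]⁴) and satisfy ∫_{[0,2π]⁴} u_j dx = 0, one has ∫_{[0,2π]⁴} ( Σ_{j=1}^N u_j(x)² )^{3/2} dx ≤ K · Σ_{j=1}^N ∫_{[0,2π]⁴} |∇u_j(x)|² dx. Then K ≥ 3/(16π²). -/

import Mathlib

open Real MeasureTheory

/-!
Test the inequality on the pair `u₁ = c cos x₀`, `u₂ = c sin x₀`. Since `u₁² + u₂² ≡ c²`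
is constant, the left side is `(2π)⁴ c³`, while each `|∇uⱼ|²` integrates to `c² (2π)³ π`.
Orthonormality forces `c² (2π)³ π = 1`, so the inequality reads `2c ≤ 2K`, and
`c = 1 / (2√2 π²) ≥ 3 / (16π²)`.
-/

/-- The cube `[0, 2π]⁴ ⊆ ℝ⁴`, a fundamental domain of the `4`-torus. -/
def torusCube : Set (EuclideanSpace ℝ (Fin 4)) :=
  {x | ∀ i, x i ∈ Set.Icc (0 : ℝ) (2 * π)}

theorem Function.Periodic.apply_add_lattice {ι : Type*} {φ : ℝ → ℝ} {T : ℝ}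
    (hφ : Function.Periodic φ T) (i : ι) (k : ι → ℤ) (x : EuclideanSpace ℝ ι) :
    φ ((x + (EuclideanSpace.equiv ι ℝ).symm fun j => T * k j) i) = φ (x i) := by
  simpa [mul_comm] using hφ.int_mul (k i) (x i)

section

variable {ι : Type*} [Fintype ι]

theorem MeasureTheory.setIntegral_univ_pi_Icc_comp_eval [DecidableEq ι] {a b : ℝ} (hab : a ≤ b)
    (i : ι) (f : ℝ → ℝ) :
    ∫ y in Set.univ.pi fun _ : ι => Set.Icc a b, f (y i)
      = (b - a) ^ (Fintype.card ι - 1) * ∫ t in a..b, f t := by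
  let g : ι → ℝ → ℝ := Function.update (fun _ _ => 1) i f
  have hg : ∀ y : ι → ℝ, ∏ j, g j (y j) = f (y i) := fun y => by
    rw [Finset.prod_eq_single i (fun j _ hj => by simp [g, hj]) (by simp)]
    simp [g]
  simp_rw [volume_pi, Measure.restrict_pi_pi, ← hg, integral_fintype_prod_eq_prod]
  have hint : ∀ j, ∫ t in Set.Icc a b, g j t
      = Function.update (fun _ => b - a) i (∫ t in a..b, f t) j := fun j => by
    by_cases hj : j = i
    · subst hj
      simp [g, integral_Icc_eq_integral_Ioc, intervalIntegral.integral_of_le hab]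
    · simp [g, hj, hab]
  simp_rw [hint, Finset.prod_update_of_mem (Finset.mem_univ i), Finset.prod_const,
    Finset.card_sdiff, Finset.card_univ]
  simp [mul_comm]

theorem EuclideanSpace.hasGradientAt_comp_apply [DecidableEq ι] {g : ℝ → ℝ} {g' : ℝ}
    {x : EuclideanSpace ℝ ι} {i : ι} (hg : HasDerivAt g g' (x i)) :
    HasGradientAt (fun y : EuclideanSpace ℝ ι => g (y i))
      (g' • EuclideanSpace.single i 1) x := by
  rw [hasGradientAt_iff_hasFDerivAt]
  have hproj := (EuclideanSpace.proj i : EuclideanSpace ℝ ι →L[ℝ] ℝ).hasFDerivAt (x := x)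
  refine (hg.comp_hasFDerivAt x hproj).congr_fderiv ?_
  ext y
  simp [EuclideanSpace.inner_single_left]

theorem EuclideanSpace.norm_gradient_comp_apply {g : ℝ → ℝ} {g' : ℝ}
    {x : EuclideanSpace ℝ ι} {i : ι} (hg : HasDerivAt g g' (x i)) :
    ‖gradient (fun y : EuclideanSpace ℝ ι => g (y i)) x‖ = |g'| := by
  classical
  simp [(hasGradientAt_comp_apply hg).gradient, norm_smul]

end

theorem integral_torusCube_comp_apply_zero (f : ℝ → ℝ) :
    ∫ x in torusCube, f (x 0) = (2 * π) ^ 3 * ∫ t in (0)..(2 * π), f t := by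
  have hcube : torusCube = WithLp.ofLp ⁻¹' Set.univ.pi fun _ => Set.Icc 0 (2 * π) := by
    ext x
    simp only [torusCube, Set.mem_ofPred_eq, Set.mem_preimage, Set.mem_univ_pi]
  rw [hcube, (PiLp.volume_preserving_ofLp (Fin 4)).setIntegral_preimage_emb
    (MeasurableEquiv.toLp 2 (Fin 4 → ℝ)).symm.measurableEmbedding (fun y => f (y 0)),
    setIntegral_univ_pi_Icc_comp_eval (by positivity)]
  simp

noncomputable def cosSin : Fin 2 → ℝ → ℝ := ![cos, sin]

theorem contDiff_cosSin (j : Fin 2) : ContDiff ℝ 1 (cosSin j) := by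
  fin_cases j
  exacts [contDiff_cos, contDiff_sin]

theorem periodic_cosSin (j : Fin 2) : Function.Periodic (cosSin j) (2 * π) := by
  fin_cases j
  exacts [cos_periodic, sin_periodic]

theorem sum_cosSin_sq (t : ℝ) : ∑ j, cosSin j t ^ 2 = 1 := by
  simp [cosSin, cos_sq_add_sin_sq]

theorem integral_cosSin (j : Fin 2) : ∫ t in (0)..(2 * π), cosSin j t = 0 := by
  fin_cases j <;> simp [cosSin]

theorem integral_cosSin_mul (i j : Fin 2) :
    ∫ t in (0)..(2 * π), cosSin i t * cosSin j t = if i = j then π else 0 := by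
  fin_cases i <;> fin_cases j <;>
    simp [cosSin, ← sq, integral_cos_sq, integral_sin_sq, integral_sin_mul_cos₁, mul_comm (cos _)]

theorem integral_deriv_cosSin_sq (j : Fin 2) :
    ∫ t in (0)..(2 * π), deriv (cosSin j) t ^ 2 = π := by
  fin_cases j <;> simp [cosSin, integral_cos_sq, integral_sin_sq]

noncomputable def cosSinScale : ℝ := (√((2 * π) ^ 3 * π))⁻¹

theorem cosSinScale_pos : 0 < cosSinScale := by
  unfold cosSinScale
  positivity

theorem cosSinScale_sq_mul : cosSinScale ^ 2 * ((2 * π) ^ 3 * π) = 1 := by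
  rw [cosSinScale, inv_pow, sq_sqrt (by positivity), inv_mul_cancel₀ (by positivity)]

theorem three_div_le_cosSinScale : 3 / (16 * π ^ 2) ≤ cosSinScale := by
  rw [cosSinScale, le_inv_comm₀ (by positivity) (by positivity), inv_div, sqrt_le_iff]
  refine ⟨by positivity, ?_⟩
  nlinarith [pow_pos pi_pos 4]

noncomputable def torusCosSin (j : Fin 2) (x : EuclideanSpace ℝ (Fin 4)) : ℝ :=
  cosSinScale * cosSin j (x 0)

theorem contDiff_torusCosSin (j : Fin 2) : ContDiff ℝ 1 (torusCosSin j) :=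
  contDiff_const.mul <|
    (contDiff_cosSin j).comp (EuclideanSpace.proj 0 : EuclideanSpace ℝ (Fin 4) →L[ℝ] ℝ).contDiff

theorem torusCosSin_add_lattice (j : Fin 2) (k : Fin 4 → ℤ)
    (x : EuclideanSpace ℝ (Fin 4)) :
    torusCosSin j (x + (EuclideanSpace.equiv (Fin 4) ℝ).symm fun i => 2 * π * (k i : ℝ))
      = torusCosSin j x := by
  rw [torusCosSin, (periodic_cosSin j).apply_add_lattice, torusCosSin]

theorem integral_torusCosSin_mul (i j : Fin 2) :
    ∫ x in torusCube, torusCosSin i x * torusCosSin j x = if i = j then 1 else 0 := by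
  simp_rw [torusCosSin, mul_mul_mul_comm, integral_torusCube_comp_apply_zero
    (fun t => cosSinScale * cosSinScale * (cosSin i t * cosSin j t)),
    intervalIntegral.integral_const_mul, integral_cosSin_mul]
  split_ifs
  · linear_combination cosSinScale_sq_mul
  · ring

theorem integral_torusCosSin (j : Fin 2) : ∫ x in torusCube, torusCosSin j x = 0 := by
  simp_rw [torusCosSin, integral_torusCube_comp_apply_zero (fun t => cosSinScale * cosSin j t),
    intervalIntegral.integral_const_mul, integral_cosSin, mul_zero]

theorem integral_norm_gradient_torusCosSin_sq (j : Fin 2) :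
    ∫ x in torusCube, ‖gradient (torusCosSin j) x‖ ^ 2 = 1 := by
  have hderiv (t : ℝ) : HasDerivAt (fun t => cosSinScale * cosSin j t)
      (cosSinScale * deriv (cosSin j) t) t :=
    (((contDiff_cosSin j).differentiable one_ne_zero).differentiableAt.hasDerivAt).const_mul _
  have hgrad (x : EuclideanSpace ℝ (Fin 4)) :
      ‖gradient (torusCosSin j) x‖ ^ 2 = (cosSinScale * deriv (cosSin j) (x 0)) ^ 2 := by
    rw [← sq_abs (_ * _), ← EuclideanSpace.norm_gradient_comp_apply (hderiv (x 0))]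
    rfl
  simp_rw [hgrad,
    integral_torusCube_comp_apply_zero (fun t => (cosSinScale * deriv (cosSin j) t) ^ 2),
    mul_pow, intervalIntegral.integral_const_mul, integral_deriv_cosSin_sq]
  linear_combination cosSinScale_sq_mul

theorem integral_rpow_sum_torusCosSin_sq :
    ∫ x in torusCube, (∑ j, torusCosSin j x ^ 2) ^ (3 / 2 : ℝ) = 2 * cosSinScale := by
  have hsum (x : EuclideanSpace ℝ (Fin 4)) : ∑ j, torusCosSin j x ^ 2 = cosSinScale ^ 2 := by
    simp_rw [torusCosSin, mul_pow, ← Finset.mul_sum, sum_cosSin_sq, mul_one]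
  have hpow : (cosSinScale ^ 2) ^ (3 / 2 : ℝ) = cosSinScale ^ 3 := by
    rw [← rpow_natCast, ← rpow_mul cosSinScale_pos.le]
    norm_num
  simp_rw [hsum, hpow, integral_torusCube_comp_apply_zero (fun _ => cosSinScale ^ 3),
    intervalIntegral.integral_const, smul_eq_mul]
  linear_combination (2 * cosSinScale) * cosSinScale_sq_mul

theorem stmt_3_general (K : ℝ)
    (hLT : ∀ (N : ℕ) (u : Fin N → EuclideanSpace ℝ (Fin 4) → ℝ),
      (∀ j, ContDiff ℝ 1 (u j)) →
      (∀ j (k : Fin 4 → ℤ) (x : EuclideanSpace ℝ (Fin 4)),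
        u j (x + (EuclideanSpace.equiv (Fin 4) ℝ).symm
          (fun i => 2 * π * (k i : ℝ))) = u j x) →
      (∀ i j, (∫ x in torusCube, u i x * u j x) = if i = j then 1 else 0) →
      (∀ j, (∫ x in torusCube, u j x) = 0) →
      (∫ x in torusCube, (∑ j, u j x ^ 2) ^ (3 / 2 : ℝ))
        ≤ K * ∑ j, ∫ x in torusCube, ‖gradient (u j) x‖ ^ 2) :
    3 / (16 * π ^ 2) ≤ K := by
  have h := hLT 2 torusCosSin contDiff_torusCosSin torusCosSin_add_lattice
    integral_torusCosSin_mul integral_torusCosSin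
  rw [integral_rpow_sum_torusCosSin_sq, Fin.sum_univ_two, integral_norm_gradient_torusCosSin_sq,
    integral_norm_gradient_torusCosSin_sq] at h
  linarith [three_div_le_cosSinScale]

/-- Lower bound for the Lieb–Thirring constant on `T⁴`: if `K ≥ 0` is such
that `∫_{[0,2π]⁴} (∑ⱼ uⱼ²)^{3/2} dx ≤ K ∑ⱼ ∫_{[0,2π]⁴} |∇uⱼ|² dx` for every
finite family of continuously differentiable, `2π`-periodic functions that are
orthonormal in `L²([0,2π]⁴)` with zero mean, then `K ≥ 3/(16π²)`. -/
theorem stmt_3 (K : ℝ) (hK : 0 ≤ K)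
    (hLT : ∀ (N : ℕ) (u : Fin N → EuclideanSpace ℝ (Fin 4) → ℝ),
      (∀ j, ContDiff ℝ 1 (u j)) →
      (∀ j (k : Fin 4 → ℤ) (x : EuclideanSpace ℝ (Fin 4)),
        u j (x + (EuclideanSpace.equiv (Fin 4) ℝ).symm
          (fun i => 2 * π * (k i : ℝ))) = u j x) →
      (∀ i j, (∫ x in torusCube, u i x * u j x) = if i = j then 1 else 0) →
      (∀ j, (∫ x in torusCube, u j x) = 0) →
      (∫ x in torusCube, (∑ j, u j x ^ 2) ^ (3 / 2 : ℝ))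
        ≤ K * ∑ j, ∫ x in torusCube, ‖gradient (u j) x‖ ^ 2) :
    3 / (16 * π ^ 2) ≤ K :=
  stmt_3_general K hLT
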